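/- Let ν_t^{tot} be the TD(λ) target distribution defined by the normalized mixture Pr(Ẑ_t^{tot} = z) ∝ (1-λ) Σ_{i=0}^∞ λ^i w_i (1/M) Σ_{m=1}^M δ_{Ẑ^{(i+1)}_{R,m}}(z), where Ẑ^{(i)}(s_t,a_t) = R_t + γ Ẑ^{(i-1)}(s_{t+1},a_{t+1}) and w_i = Π_{j=t+1}^{t+i} π(a_j|s_j)/μ(a_j|s_j). Then the target satisfies the recursion Pr(Ẑ_t^{tot} = z) = ((1-λ)/N_t) (1/M) Σ_m δ_{Ẑ^{(1)}_{t,m}}(z) + λ (N_{t+1}/N_t) (π(a_{t+1}|s_{t+1})/μ(a_{t+1}|s_{t+1})) Pr(R_t + γ Ẑ^{tot}_{t+1} = z), where N_t is the normalization factor. -/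
import Mathlib


open MeasureTheory

/-- The quantile distribution with `M` equally weighted atoms given by `f`. -/
noncomputable def atomMeasure {M : ℕ} (f : Fin M → ℝ) : Measure ℝ :=
  (M : ENNReal)⁻¹ • ∑ m, Measure.dirac (f m)

set_option maxHeartbeats 1000000 in
private lemma key_split (A u v : ℕ → ENNReal) (a b c : ENNReal)
    (h0 : a * u 0 = b) (hi : ∀ i, a * u (i + 1) = c * v i) :
    a * ∑' i, u i * A i = b * A 0 + c * ∑' i : ℕ, v i * A (i + 1) := by
  rw [tsum_eq_zero_add' ENNReal.summable, mul_add, ← mul_assoc, h0,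
    ← ENNReal.tsum_mul_left, ← ENNReal.tsum_mul_left]
  congr 1
  exact tsum_congr fun i => by rw [← mul_assoc, hi, mul_assoc]

set_option maxHeartbeats 400000 in
/-- Recursion for the TD(λ) target distribution: the target at time `t`, defined as the
normalized mixture `(1/N_t)(1-λ) Σ_i λ^i w_i · (1/M) Σ_m δ_{Ẑ^{(i+1)}_{R,m}}`, equals the
weighted sum of the one-step target and the shifted target at time `t+1`:
`Pr(Ẑ_t^tot = z) = ((1-λ)/N_t)(1/M)Σ_m δ_{Ẑ^{(1)}_{t,m}}(z)
  + λ (N_{t+1}/N_t)(π(a_{t+1}|s_{t+1})/μ(a_{t+1}|s_{t+1})) Pr(R_t + γ Ẑ^tot_{t+1} = z)`. -/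
theorem stmt_17 {M : ℕ} (hM : 0 < M) (lam γ Rt ρ : ℝ)
    (hlam0 : 0 ≤ lam) (hlam1 : lam < 1) (hγ : 0 < γ) (hρ : 0 ≤ ρ)
    (Zt Zt1 : ℕ → Fin M → ℝ) (w w' : ℕ → ℝ)
    (hw' : ∀ i, 0 ≤ w' i) (hw0 : w 0 = 1)
    (hwrec : ∀ i, w (i + 1) = ρ * w' i)
    (hZrec : ∀ i m, Zt (i + 1) m = Rt + γ * Zt1 i m)
    (Nt Nt1 : ℝ) (hNt : 0 < Nt) (hNt1 : 0 < Nt1)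
    (hNtdef : Nt = ∑' i : ℕ, (1 - lam) * lam ^ i * w i)
    (hNt1def : Nt1 = ∑' i : ℕ, (1 - lam) * lam ^ i * w' i) :
    let νt : Measure ℝ := ENNReal.ofReal (1 / Nt) •
      Measure.sum fun i : ℕ =>
        ENNReal.ofReal ((1 - lam) * lam ^ i * w i) • atomMeasure (Zt i)
    let νt1 : Measure ℝ := ENNReal.ofReal (1 / Nt1) •
      Measure.sum fun i : ℕ =>
        ENNReal.ofReal ((1 - lam) * lam ^ i * w' i) • atomMeasure (Zt1 i)
    νt = ENNReal.ofReal ((1 - lam) / Nt) • atomMeasure (Zt 0) +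
      ENNReal.ofReal (lam * (Nt1 / Nt) * ρ) • νt1.map (fun x => Rt + γ * x) := by
  intro νt νt1
  have h1lam : 0 ≤ 1 - lam := by linarith
  have hw : ∀ i, 0 ≤ w i := by
    intro i
    cases i with
    | zero => simp [hw0]
    | succ n => rw [hwrec]; exact mul_nonneg hρ (hw' n)
  have hmeas : Measurable fun x : ℝ => Rt + γ * x :=
    measurable_const.add (measurable_const.mul measurable_id)
  ext s hs
  have hps : MeasurableSet ((fun x : ℝ => Rt + γ * x) ⁻¹' s) := hmeas hs
  have hatom : ∀ i, atomMeasure (Zt1 i) ((fun x : ℝ => Rt + γ * x) ⁻¹' s)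
      = atomMeasure (Zt (i + 1)) s := by
    intro i
    simp only [atomMeasure, Measure.smul_apply, Measure.coe_finset_sum, Finset.sum_apply,
      smul_eq_mul]
    congr 1
    apply Finset.sum_congr rfl
    intro m _
    rw [Measure.dirac_apply' _ hps, Measure.dirac_apply' _ hs]
    have hmem : Zt1 i m ∈ (fun x : ℝ => Rt + γ * x) ⁻¹' s ↔ Zt (i + 1) m ∈ s := by
      rw [Set.mem_preimage, ← hZrec]
    by_cases h : Zt (i + 1) m ∈ s
    · rw [Set.indicator_of_mem (hmem.mpr h), Set.indicator_of_mem h]; rfl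
    · rw [Set.indicator_of_notMem (fun hc => h (hmem.mp hc)) _,
        Set.indicator_of_notMem h]
  have hmap : (νt1.map fun x => Rt + γ * x) s = ENNReal.ofReal (1 / Nt1) *
      ∑' i : ℕ, ENNReal.ofReal ((1 - lam) * lam ^ i * w' i) * atomMeasure (Zt (i + 1)) s := by
    rw [Measure.map_apply hmeas hs]
    show (ENNReal.ofReal (1 / Nt1) • Measure.sum fun i : ℕ =>
      ENNReal.ofReal ((1 - lam) * lam ^ i * w' i) • atomMeasure (Zt1 i))
      ((fun x : ℝ => Rt + γ * x) ⁻¹' s) = _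
    rw [Measure.smul_apply, Measure.sum_apply _ hps, smul_eq_mul]
    exact congrArg _ (tsum_congr fun i => by
      rw [Measure.smul_apply, smul_eq_mul, hatom i])
  rw [Measure.coe_add, Pi.add_apply]
  simp only [Measure.smul_apply, smul_eq_mul]
  rw [hmap]
  have hlhs : νt s = ENNReal.ofReal (1 / Nt) *
      ∑' i : ℕ, ENNReal.ofReal ((1 - lam) * lam ^ i * w i) * atomMeasure (Zt i) s := by
    show (ENNReal.ofReal (1 / Nt) • Measure.sum fun i : ℕ =>
      ENNReal.ofReal ((1 - lam) * lam ^ i * w i) • atomMeasure (Zt i)) s = _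
    rw [Measure.smul_apply, Measure.sum_apply _ hs, smul_eq_mul]
    exact congrArg _ (tsum_congr fun i => by rw [Measure.smul_apply, smul_eq_mul])
  rw [hlhs, ← mul_assoc]
  refine key_split (fun i => atomMeasure (Zt i) s)
    (fun i => ENNReal.ofReal ((1 - lam) * lam ^ i * w i))
    (fun i => ENNReal.ofReal ((1 - lam) * lam ^ i * w' i)) _ _ _ ?_ ?_
  · rw [← ENNReal.ofReal_mul (by positivity)]
    congr 1
    rw [hw0]
    ring
  · intro i
    rw [← ENNReal.ofReal_mul (by positivity),
      ← ENNReal.ofReal_mul (mul_nonneg (mul_nonneg hlam0 (by positivity)) hρ),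
      ← ENNReal.ofReal_mul (by positivity)]
    congr 1
    rw [hwrec]
    field_simp
    ring
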